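/- Let G, Π_X, Π_Y be profinite groups (compact, Hausdorff, totally disconnected topological groups), and let π_X : Π_X → G and π_Y : Π_Y → G be continuous surjective group homomorphisms with kernels N_X = ker π_X and N_Y = ker π_Y. Assume N_Y is slim, i.e., for every open subgroup H of N_Y the centralizer of H in N_Y is trivial. Let S₁ be the set of continuous open homomorphisms φ : Π_X → Π_Y with π_Y ∘ φ = π_X, and let S₂ be the set of continuous homomorphisms φ̄ : N_X → N_Y which are open maps and satisfy: for every s ∈ Π_X there exists t ∈ Π_Y with π_Y(t) = π_X(s) and φ̄(s·x·s⁻¹) = t·φ̄(x)·t⁻¹ for all x ∈ N_X. Let N_Y act on S₁ and on S₂ by conjugation (u·φ = (x ↦ u·φ(x)·u⁻¹)). Then restriction to N_X induces a well-defined bijection from the set of N_Y-conjugacy classes of elements of S₁ onto the set of N_Y-conjugacy classes of elements of S₂. -/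

import Mathlib

variable {G PX PY : Type*} [Group G] [Group PX] [Group PY]
  [TopologicalSpace G] [TopologicalSpace PX] [TopologicalSpace PY]

/-- The set `S₁` of continuous open homomorphisms `PX →* PY` over `G`. -/
def OverHoms (piX : PX →* G) (piY : PY →* G) : Type _ :=
  {φ : PX →* PY // Continuous φ ∧ IsOpenMap φ ∧ piY.comp φ = piX}

/-- The set `S₂` of continuous open homomorphisms `ker πX →* ker πY` compatible with
the conjugation actions (i.e. commuting with the outer actions of `G`). -/
def KerHoms (piX : PX →* G) (piY : PY →* G) : Type _ :=
  {ψ : piX.ker →* piY.ker // Continuous ψ ∧ IsOpenMap ψ ∧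
    ∀ s : PX, ∃ t : PY, piY t = piX s ∧
      ∀ x : piX.ker,
        (ψ ⟨s * (x : PX) * s⁻¹,
            (MonoidHom.normal_ker piX).conj_mem (x : PX) x.2 s⟩ : PY)
          = t * (ψ x : PY) * t⁻¹}

def conjRel1 (piX : PX →* G) (piY : PY →* G) (φ φ' : OverHoms piX piY) : Prop :=
  ∃ u : piY.ker, ∀ s : PX, φ'.1 s = (u : PY) * φ.1 s * (u : PY)⁻¹

def conjRel2 (piX : PX →* G) (piY : PY →* G) (ψ ψ' : KerHoms piX piY) : Prop :=
  ∃ u : piY.ker, ∀ x : piX.ker, ψ'.1 x = u * ψ.1 x * u⁻¹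

/-!
Slimness makes conjugators unique: if `t, t' ∈ Π_Y` have the same image in `G` and induce the
same automorphism of the open subgroup `ψ(N_X)` of `N_Y`, then `t⁻¹ t'` centralizes it, so
`t = t'`. Hence every `ψ ∈ S₂` extends to exactly one homomorphism `Π_X → Π_Y` over `G`, sending
`s` to its conjugator. That extension is continuous because its graph is closed and `Π_Y` is
compact, and it is open because its image is closed, meets `N_Y` in an open subgroup and maps
onto `G`, so has finite index; the open mapping theorem does the rest. Restriction and extension
are then mutually inverse and both commute with conjugation by `N_Y`.
-/

def IsSlim (N : Type*) [Group N] [TopologicalSpace N] : Prop :=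
  ∀ H : Subgroup N, IsOpen (H : Set N) → ∀ c ∈ Subgroup.centralizer (H : Set N), c = 1

theorem IsSlim.eq_of_forall_conj_eq {P M : Type*} [Group P] [TopologicalSpace P] [Group M]
    {N : Subgroup P} (hN : IsSlim N) {f : M →* N} (hf : IsOpen (Set.range f)) {t t' : P}
    (htt' : t⁻¹ * t' ∈ N) (h : ∀ x, t * f x * t⁻¹ = t' * f x * t'⁻¹) : t = t' := by
  have hc : (⟨t⁻¹ * t', htt'⟩ : N) ∈ Subgroup.centralizer (f.range : Set N) := by
    rintro _ ⟨x, rfl⟩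
    apply Subtype.ext
    calc (f x : P) * (t⁻¹ * t') = t⁻¹ * (t * f x * t⁻¹) * t' := by group
      _ = t⁻¹ * (t' * f x * t'⁻¹) * t' := by rw [h x]
      _ = t⁻¹ * t' * f x := by group
  have h1 := congrArg Subtype.val (hN f.range (by rwa [MonoidHom.coe_range]) _ hc)
  exact inv_mul_eq_one.mp h1

theorem Subgroup.index_eq_relIndex_of_forall_inv_mul_mem {B : Type*} [Group B]
    (K N : Subgroup B) (h : ∀ b : B, ∃ n ∈ N, n⁻¹ * b ∈ K) : K.index = K.relIndex N := by
  have hsmul : ∀ (n : N) (b : B), n • (b : B ⧸ K) = ((n * b : B) : B ⧸ K) := fun _ _ => rfl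
  have horbit : MulAction.orbit N ((1 : B) : B ⧸ K) = Set.univ := by
    refine Set.eq_univ_of_forall (QuotientGroup.mk_surjective.forall.2 fun b => ?_)
    obtain ⟨n, hn, hb⟩ := h b
    exact ⟨⟨n, hn⟩, by simpa [hsmul, QuotientGroup.eq] using hb⟩
  have hstab : MulAction.stabilizer N ((1 : B) : B ⧸ K) = K.subgroupOf N := by
    ext; simp [hsmul, QuotientGroup.eq, Subgroup.mem_subgroupOf]
  rw [Subgroup.relIndex, ← hstab, MulAction.index_stabilizer, horbit, Set.ncard_univ,
    Subgroup.index]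

theorem Subgroup.isOpen_of_isClosed_of_isOpen_subgroupOf {B : Type*} [Group B]
    [TopologicalSpace B] [IsTopologicalGroup B] [CompactSpace B] {K N : Subgroup B}
    (hK : IsClosed (K : Set B)) (hN : IsClosed (N : Set B)) (hKN : ∀ b : B, ∃ n ∈ N, n⁻¹ * b ∈ K)
    (hopen : IsOpen (K.subgroupOf N : Set N)) : IsOpen (K : Set B) := by
  have : CompactSpace N := isCompact_iff_compactSpace.mp hN.isCompact
  have : Finite (N ⧸ K.subgroupOf N) := (K.subgroupOf N).quotient_finite_of_isOpen hopen
  have : K.FiniteIndex := ⟨by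
    rw [K.index_eq_relIndex_of_forall_inv_mul_mem N hKN]
    exact Subgroup.index_ne_zero_of_finite⟩
  exact K.isOpen_of_isClosed_of_finiteIndex hK

theorem continuous_of_isClosed_graph {X Y : Type*} [TopologicalSpace X] [TopologicalSpace Y]
    [CompactSpace Y] {f : X → Y} (h : IsClosed {p : X × Y | f p.1 = p.2}) : Continuous f := by
  refine continuous_iff_isClosed.2 fun C hC => ?_
  have : f ⁻¹' C = Prod.fst '' ({p : X × Y | f p.1 = p.2} ∩ Set.univ ×ˢ C) := by
    ext x; simp
  rw [this]
  exact isClosedMap_fst_of_compactSpace _ (h.inter (isClosed_univ.prod hC))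

theorem MonoidHom.isOpenMap_of_isOpen_range {A B : Type*} [Group A] [TopologicalSpace A]
    [IsTopologicalGroup A] [SigmaCompactSpace A] [Group B] [TopologicalSpace B]
    [IsTopologicalGroup B] [LocallyCompactSpace B] [T2Space B] (f : A →* B) (hf : Continuous f)
    (hr : IsOpen (f.range : Set B)) : IsOpenMap f := by
  have : LocallyCompactSpace f.range := hr.locallyCompactSpace
  exact hr.isOpenMap_subtype_val.comp
    (f.rangeRestrict.isOpenMap_of_sigmaCompact f.rangeRestrict_surjective (hf.subtype_mk _))

section Intertwines

omit [TopologicalSpace G] [TopologicalSpace PX] [TopologicalSpace PY]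

variable {piX : PX →* G} {piY : PY →* G}

def Intertwines (ψ : piX.ker →* piY.ker) (s : PX) (t : PY) : Prop :=
  piY t = piX s ∧ ∀ x : piX.ker,
    (ψ ⟨s * (x : PX) * s⁻¹, (MonoidHom.normal_ker piX).conj_mem (x : PX) x.2 s⟩ : PY)
      = t * (ψ x : PY) * t⁻¹

variable {ψ : piX.ker →* piY.ker} {s s' : PX} {t t' : PY}

theorem Intertwines.mul (h : Intertwines ψ s t) (h' : Intertwines ψ s' t') :
    Intertwines ψ (s * s') (t * t') := by
  refine ⟨by rw [map_mul, map_mul, h.1, h'.1], fun x => ?_⟩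
  have hx := h.2 ⟨s' * x * s'⁻¹, (MonoidHom.normal_ker piX).conj_mem _ x.2 s'⟩
  rw [h'.2 x] at hx
  calc (ψ ⟨s * s' * x * (s * s')⁻¹, _⟩ : PY)
      = ψ ⟨s * (s' * x * s'⁻¹) * s⁻¹, (MonoidHom.normal_ker piX).conj_mem _
          ((MonoidHom.normal_ker piX).conj_mem _ x.2 s') s⟩ := by
        congr 3; group
    _ = t * t' * ψ x * (t * t')⁻¹ := by rw [hx]; group

theorem intertwines_self (x : piX.ker) : Intertwines ψ x (ψ x) :=
  ⟨by rw [MonoidHom.mem_ker.mp (ψ x).2, MonoidHom.mem_ker.mp x.2], fun y => by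
    change (ψ (x * y * x⁻¹) : PY) = _
    simp only [map_mul, map_inv, Subgroup.coe_mul, Subgroup.coe_inv]⟩

theorem Intertwines.conj {ψ' : piX.ker →* piY.ker} {u : piY.ker}
    (hψ' : ∀ x, ψ' x = u * ψ x * u⁻¹) (h : Intertwines ψ s t) :
    Intertwines ψ' s (u * t * u⁻¹) := by
  refine ⟨by simp [MonoidHom.mem_ker.mp u.2, h.1], fun x => ?_⟩
  simp only [hψ', Subgroup.coe_mul, Subgroup.coe_inv, h.2]
  group

end Intertwines

omit [TopologicalSpace G] [TopologicalSpace PX] in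
theorem Intertwines.unique {piX : PX →* G} {piY : PY →* G} (hslim : IsSlim piY.ker)
    {ψ : piX.ker →* piY.ker} (hψ : IsOpen (Set.range ψ)) {s : PX} {t t' : PY}
    (h : Intertwines ψ s t) (h' : Intertwines ψ s t') : t = t' :=
  hslim.eq_of_forall_conj_eq hψ (by simp [h.1, h'.1]) fun x => (h.2 x).symm.trans (h'.2 x)

theorem isClosed_setOf_intertwines [IsTopologicalGroup PX] [IsTopologicalGroup PY] [T2Space G]
    [T2Space PY] {piX : PX →* G} {piY : PY →* G} (hpiXc : Continuous piX)
    (hpiYc : Continuous piY) {ψ : piX.ker →* piY.ker} (hψ : Continuous ψ) :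
    IsClosed {p : PX × PY | Intertwines ψ p.1 p.2} := by
  simp only [Intertwines, Set.ofPred_and, Set.ofPred_forall]
  refine (isClosed_eq (by fun_prop) (by fun_prop)).inter (isClosed_iInter fun x => ?_)
  refine isClosed_eq (continuous_subtype_val.comp (hψ.comp (Continuous.subtype_mk ?_ _)))
    (by fun_prop)
  fun_prop

section Restriction

omit [TopologicalSpace G]

variable {piX : PX →* G} {piY : PY →* G}

namespace OverHoms

theorem comp_apply (φ : OverHoms piX piY) (s : PX) : piY (φ.1 s) = piX s :=
  DFunLike.congr_fun φ.2.2.2 s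

@[ext]
theorem ext {φ φ' : OverHoms piX piY} (h : ∀ s, φ.1 s = φ'.1 s) : φ = φ' :=
  Subtype.ext (MonoidHom.ext h)

def restrictHom (φ : OverHoms piX piY) : piX.ker →* piY.ker :=
  (φ.1.domRestrict piX.ker).codRestrict piY.ker fun x => by
    rw [MonoidHom.mem_ker, MonoidHom.domRestrict_apply, comp_apply]
    exact x.2

theorem intertwines_restrictHom (φ : OverHoms piX piY) (s : PX) :
    Intertwines φ.restrictHom s (φ.1 s) :=
  ⟨φ.comp_apply s, fun x => by simp [restrictHom]⟩

theorem isOpenMap_restrictHom (φ : OverHoms piX piY) : IsOpenMap φ.restrictHom := by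
  have hker : (piX.ker : Set PX) = φ.1 ⁻¹' piY.ker := by
    ext s; simp [comp_apply]
  exact (φ.2.2.1.restrictPreimage _).comp (Homeomorph.setCongr hker).isOpenMap

def restrict (φ : OverHoms piX piY) : KerHoms piX piY :=
  ⟨φ.restrictHom, (φ.2.1.comp continuous_subtype_val).subtype_mk _, φ.isOpenMap_restrictHom,
    fun s => ⟨φ.1 s, φ.intertwines_restrictHom s⟩⟩

theorem conjRel2_restrict {φ φ' : OverHoms piX piY} (h : conjRel1 piX piY φ φ') :
    conjRel2 piX piY φ.restrict φ'.restrict :=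
  let ⟨u, hu⟩ := h
  ⟨u, fun x => Subtype.ext (hu x)⟩

end OverHoms

namespace KerHoms

@[ext]
theorem ext {ψ ψ' : KerHoms piX piY} (h : ∀ x, (ψ.1 x : PY) = ψ'.1 x) : ψ = ψ' :=
  Subtype.ext (MonoidHom.ext fun x => Subtype.ext (h x))

noncomputable def conjugator (ψ : KerHoms piX piY) (s : PX) : PY :=
  (ψ.2.2.2 s).choose

theorem intertwines_conjugator (ψ : KerHoms piX piY) (s : PX) :
    Intertwines ψ.1 s (ψ.conjugator s) :=
  (ψ.2.2.2 s).choose_spec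

theorem conjugator_eq (hslim : IsSlim piY.ker) (ψ : KerHoms piX piY) {s : PX} {t : PY}
    (h : Intertwines ψ.1 s t) : ψ.conjugator s = t :=
  (ψ.intertwines_conjugator s).unique hslim ψ.2.2.1.isOpen_range h

variable (hslim : IsSlim piY.ker) (ψ : KerHoms piX piY)

noncomputable def extendHom : PX →* PY :=
  MonoidHom.mk' ψ.conjugator fun s s' =>
    ψ.conjugator_eq hslim ((ψ.intertwines_conjugator s).mul (ψ.intertwines_conjugator s'))

theorem extendHom_apply_ker (x : piX.ker) : ψ.extendHom hslim x = ψ.1 x :=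
  ψ.conjugator_eq hslim (intertwines_self x)

theorem comp_extendHom : piY.comp (ψ.extendHom hslim) = piX :=
  MonoidHom.ext fun s => (ψ.intertwines_conjugator s).1

end KerHoms

end Restriction

namespace KerHoms

variable {piX : PX →* G} {piY : PY →* G} (hslim : IsSlim piY.ker) (ψ : KerHoms piX piY)

theorem continuous_extendHom [IsTopologicalGroup PX] [IsTopologicalGroup PY] [T2Space G]
    [T2Space PY] [CompactSpace PY] (hpiXc : Continuous piX) (hpiYc : Continuous piY) :
    Continuous (ψ.extendHom hslim) := by
  refine continuous_of_isClosed_graph ?_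
  have hgraph : {p : PX × PY | ψ.extendHom hslim p.1 = p.2} =
      {p : PX × PY | Intertwines ψ.1 p.1 p.2} := by
    ext ⟨s, t⟩
    exact ⟨fun (h : ψ.conjugator s = t) => h ▸ ψ.intertwines_conjugator s,
      ψ.conjugator_eq hslim⟩
  rw [hgraph]
  exact isClosed_setOf_intertwines hpiXc hpiYc ψ.2.1

theorem isOpen_range_extendHom [IsTopologicalGroup PX] [IsTopologicalGroup PY] [T2Space G]
    [T2Space PY] [CompactSpace PX] [CompactSpace PY] (hpiXc : Continuous piX)
    (hpiYc : Continuous piY) (hsX : Function.Surjective piX) :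
    IsOpen ((ψ.extendHom hslim).range : Set PY) := by
  have hc := ψ.continuous_extendHom hslim hpiXc hpiYc
  refine Subgroup.isOpen_of_isClosed_of_isOpen_subgroupOf (N := piY.ker) ?_ ?_ ?_ ?_
  · rw [MonoidHom.coe_range]
    exact (isCompact_range hc).isClosed
  · rw [MonoidHom.coe_ker]
    exact isClosed_singleton.preimage hpiYc
  · intro b
    obtain ⟨s, hs⟩ := hsX (piY b)
    have hover : piY (ψ.extendHom hslim s) = piX s := (ψ.intertwines_conjugator s).1
    refine ⟨b * (ψ.extendHom hslim s)⁻¹, by simp [hover, hs], ⟨s, by group⟩⟩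
  · refine Subgroup.isOpen_mono (H₁ := ψ.1.range) ?_ ψ.2.2.1.isOpen_range
    rintro _ ⟨x, rfl⟩
    exact ⟨x, ψ.extendHom_apply_ker hslim x⟩

variable [IsTopologicalGroup PX] [CompactSpace PX] [IsTopologicalGroup PY] [CompactSpace PY]
  [T2Space PY] [T2Space G] (hpiXc : Continuous piX) (hpiYc : Continuous piY)
  (hsX : Function.Surjective piX)

noncomputable def extend : OverHoms piX piY :=
  have hc := ψ.continuous_extendHom hslim hpiXc hpiYc
  ⟨ψ.extendHom hslim, hc,
    (ψ.extendHom hslim).isOpenMap_of_isOpen_range hc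
      (ψ.isOpen_range_extendHom hslim hpiXc hpiYc hsX),
    ψ.comp_extendHom hslim⟩

theorem restrict_extend : (ψ.extend hslim hpiXc hpiYc hsX).restrict = ψ :=
  KerHoms.ext (ψ.extendHom_apply_ker hslim)

theorem extend_restrict (φ : OverHoms piX piY) :
    φ.restrict.extend hslim hpiXc hpiYc hsX = φ :=
  OverHoms.ext fun s => φ.restrict.conjugator_eq hslim (φ.intertwines_restrictHom s)

theorem conjRel1_extend {ψ ψ' : KerHoms piX piY} (h : conjRel2 piX piY ψ ψ') :
    conjRel1 piX piY (ψ.extend hslim hpiXc hpiYc hsX) (ψ'.extend hslim hpiXc hpiYc hsX) :=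
  let ⟨u, hu⟩ := h
  ⟨u, fun s => ψ'.conjugator_eq hslim ((ψ.intertwines_conjugator s).conj hu)⟩

end KerHoms

theorem restriction_bijection_on_conjugacy_classes_general
    [T2Space G]
    [IsTopologicalGroup PX] [CompactSpace PX]
    [IsTopologicalGroup PY] [CompactSpace PY] [T2Space PY]
    (piX : PX →* G) (piY : PY →* G)
    (hpiXc : Continuous piX) (hpiYc : Continuous piY)
    (hsX : Function.Surjective piX)
    (hslim : ∀ H : Subgroup piY.ker, IsOpen (H : Set piY.ker) →
      ∀ c ∈ Subgroup.centralizer (H : Set piY.ker), c = 1) :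
    (∀ φ : OverHoms piX piY, ∃ ψ : KerHoms piX piY,
        ∀ x : piX.ker, φ.1 (x : PX) = (ψ.1 x : PY)) ∧
    ∃ F : Quot (conjRel1 piX piY) ≃ Quot (conjRel2 piX piY),
      ∀ (φ : OverHoms piX piY) (ψ : KerHoms piX piY),
        (∀ x : piX.ker, φ.1 (x : PX) = (ψ.1 x : PY)) →
          F (Quot.mk _ φ) = Quot.mk _ ψ := by
  refine ⟨fun φ => ⟨φ.restrict, fun _ => rfl⟩, ?_⟩
  let F : Quot (conjRel1 piX piY) ≃ Quot (conjRel2 piX piY) :=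
    { toFun := Quot.map OverHoms.restrict fun _ _ => OverHoms.conjRel2_restrict
      invFun := Quot.map (·.extend hslim hpiXc hpiYc hsX) fun _ _ =>
        KerHoms.conjRel1_extend hslim hpiXc hpiYc hsX
      left_inv := Quot.ind fun φ =>
        congrArg (Quot.mk _) (KerHoms.extend_restrict hslim hpiXc hpiYc hsX φ)
      right_inv := Quot.ind fun ψ =>
        congrArg (Quot.mk _) (ψ.restrict_extend hslim hpiXc hpiYc hsX) }
  exact ⟨F, fun φ ψ h => congrArg (Quot.mk _) (KerHoms.ext h)⟩

/-- Proposition 2.5 (group-theoretic content): if `ker πY` is slim, restriction to the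
kernels induces a well-defined bijection from `ker πY`-conjugacy classes of continuous
open homomorphisms `PX →* PY` over `G` to `ker πY`-conjugacy classes of continuous open
homomorphisms `ker πX →* ker πY` commuting with the outer `G`-actions. -/
theorem restriction_bijection_on_conjugacy_classes
    [IsTopologicalGroup G] [CompactSpace G] [T2Space G] [TotallyDisconnectedSpace G]
    [IsTopologicalGroup PX] [CompactSpace PX] [T2Space PX] [TotallyDisconnectedSpace PX]
    [IsTopologicalGroup PY] [CompactSpace PY] [T2Space PY] [TotallyDisconnectedSpace PY]
    (piX : PX →* G) (piY : PY →* G)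
    (hpiXc : Continuous piX) (hpiYc : Continuous piY)
    (hsX : Function.Surjective piX) (hsY : Function.Surjective piY)
    (hslim : ∀ H : Subgroup piY.ker, IsOpen (H : Set piY.ker) →
      ∀ c ∈ Subgroup.centralizer (H : Set piY.ker), c = 1) :
    (∀ φ : OverHoms piX piY, ∃ ψ : KerHoms piX piY,
        ∀ x : piX.ker, φ.1 (x : PX) = (ψ.1 x : PY)) ∧
    ∃ F : Quot (conjRel1 piX piY) ≃ Quot (conjRel2 piX piY),
      ∀ (φ : OverHoms piX piY) (ψ : KerHoms piX piY),
        (∀ x : piX.ker, φ.1 (x : PX) = (ψ.1 x : PY)) →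
          F (Quot.mk _ φ) = Quot.mk _ ψ :=
  restriction_bijection_on_conjugacy_classes_general piX piY hpiXc hpiYc hsX hslim
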